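/- arXiv:1505.01312 — 2 statements merged into one kernel-verified Lean document; each statement's English description precedes it below -/
import Mathlib

section
/- Let X and Y be complex Banach spaces, let E, H ∈ L(X) and F ∈ L(Y) be invertible positive operators, let T ∈ L(X) be such that T^†_{E,H} exists, and suppose T = B C with C ∈ L(X,Y) surjective and B ∈ L(Y,X) injective (so that B^†_{E,F} and C^†_{F,H} exist). Then the following are equivalent: (i) T is weighted EP with weights E and H; (ii) B B^†_{E,F} = C^†_{F,H} C; (iii) R(B) = R(C^†_{F,H}) and N(B^†_{E,F}) = N(C). -/
/-!
Common definitions: hermitian and positive elements of a complex unital Banach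
algebra, hermitian elements with respect to the equivalent norm induced by an
invertible positive element (weight), and the weighted Moore–Penrose inverse,
both for Banach algebra elements and for bounded linear operators between
Banach spaces.
-/

noncomputable section

/-- An element `a` of a complex unital Banach algebra is hermitian if
`‖exp(i t a)‖ = 1` for all real `t`. -/
def IsHermitianEl {A : Type*} [NormedRing A] [NormedAlgebra ℂ A] (a : A) : Prop :=
  ∀ t : ℝ, ‖NormedSpace.exp ((Complex.I * (t : ℂ)) • a)‖ = 1

/-- An element of a complex unital Banach algebra is positive if it is hermitian
and its spectrum is contained in `[0, ∞)`. -/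
def IsPositiveEl {A : Type*} [NormedRing A] [NormedAlgebra ℂ A] (a : A) : Prop :=
  IsHermitianEl a ∧ spectrum ℂ a ⊆ Complex.ofReal '' Set.Ici (0 : ℝ)

/-- `a` is hermitian in `A^u`, i.e. hermitian for the equivalent norm
`‖x‖_u = ‖u^{1/2} x u^{-1/2}‖`, where `u^{1/2}` is the (unique) invertible
positive square root of the invertible positive weight `u`. -/
def IsHermitianWt {A : Type*} [NormedRing A] [NormedAlgebra ℂ A] (u a : A) : Prop :=
  ∃ s : Aˣ, IsPositiveEl (s : A) ∧ ((s : A)) ^ 2 = u ∧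
    ∀ t : ℝ, ‖(s : A) * NormedSpace.exp ((Complex.I * (t : ℂ)) • a) * ((s⁻¹ : Aˣ) : A)‖ = 1

/-- `b` is the weighted Moore–Penrose inverse of `a` with weights `e` and `f`. -/
def IsWMPI {A : Type*} [NormedRing A] [NormedAlgebra ℂ A] (e f a b : A) : Prop :=
  a * b * a = a ∧ b * a * b = b ∧ IsHermitianWt e (a * b) ∧ IsHermitianWt f (b * a)

/-- `a` is weighted EP with weights `e` and `f`. -/
def IsWEP {A : Type*} [NormedRing A] [NormedAlgebra ℂ A] (e f a : A) : Prop :=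
  ∃ b : A, IsWMPI e f a b ∧ a * b = b * a

/-- `S ∈ L(Y,X)` is the weighted Moore–Penrose inverse of `T ∈ L(X,Y)` with
weights `E ∈ L(Y)` and `F ∈ L(X)`. -/
def IsWMPIop {X Y : Type*} [NormedAddCommGroup X] [NormedSpace ℂ X]
    [NormedAddCommGroup Y] [NormedSpace ℂ Y]
    (E : Y →L[ℂ] Y) (F : X →L[ℂ] X) (T : X →L[ℂ] Y) (S : Y →L[ℂ] X) : Prop :=
  (T.comp S).comp T = T ∧ (S.comp T).comp S = S ∧
    IsHermitianWt E (T.comp S) ∧ IsHermitianWt F (S.comp T)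

/-- `T ∈ L(X)` is weighted EP with weights `E` and `F`. -/
def IsWEPop {X : Type*} [NormedAddCommGroup X] [NormedSpace ℂ X]
    (E F T : X →L[ℂ] X) : Prop :=
  ∃ S : X →L[ℂ] X, IsWMPIop E F T S ∧ T.comp S = S.comp T

/-!
Write `Q = B B^†_{E,F}` and `R = C^†_{F,H} C`. The reverse order law holds: `C^†_{F,H} B^†_{E,F}`
is a weighted Moore–Penrose inverse of `T = B C`, with `T T^† = Q` and `T^† T = R`. Conversely,
for every weighted Moore–Penrose inverse `S` of `T`, the idempotents `T S` and `Q` have the same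
range and are hermitian for the same weighted norm, and `S T`, `R` have the same kernel. Such
idempotents coincide: `‖1 - 2p‖ = ‖exp (iπ p)‖ = 1`, and `(1 - 2p)(1 - 2q) = 1 + n` with
`n = ±2(q - p)` and `n² = 0`, whereas `‖(1 + n)ᵏ‖ = ‖1 + k n‖` must stay bounded. So `T` is
weighted EP iff `Q = R`, i.e. iff `Q` and `R` have the same range and kernel.

The weighted norms of `p` and `q` agree by uniqueness of invertible positive square roots:
`a² = b²` gives `a (a - b) + (a - b) b = 0`, and `a d + d b = 0` forces `d = 0` when `a`, `b` have
positive spectrum, because `d = vⁿ d wⁿ` with `v = 1 - εa` and `w = (1 + εb)⁻¹` of spectral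
radius `< 1`.
-/

open Filter Topology Function
open scoped NNReal ENNReal

theorem Units.conj_mul {M : Type*} [Monoid M] (s : Mˣ) (x y : M) :
    s * x * ↑s⁻¹ * (s * y * ↑s⁻¹) = s * (x * y) * ↑s⁻¹ := by
  simp [mul_assoc]

section BanachAlgebra

variable {A : Type*} [NormedRing A] [NormedAlgebra ℂ A]

theorem eq_zero_of_mul_self_eq_zero_of_norm_one_add_le {b : A} (hb : b * b = 0)
    (h : ‖1 + b‖ ≤ 1) : b = 0 := by
  have hpow : ∀ n : ℕ, (1 + b) ^ n = 1 + (n : ℂ) • b := by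
    intro n
    induction n with
    | zero => simp
    | succ n ih =>
      rw [pow_succ, ih, add_mul, one_mul, smul_mul_assoc, mul_add, mul_one, hb]
      simp only [add_zero, Nat.cast_succ, add_smul, one_smul]
      abel
  have hbound : ∀ n : ℕ, 0 < n → (n : ℝ) * ‖b‖ ≤ 1 + ‖(1 : A)‖ := fun n hn =>
    calc (n : ℝ) * ‖b‖ = ‖(1 + (n : ℂ) • b) - 1‖ := by simp [norm_smul]
      _ ≤ ‖(1 + b) ^ n‖ + ‖(1 : A)‖ := by rw [hpow]; exact norm_sub_le _ _
      _ ≤ 1 + ‖(1 : A)‖ := by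
        gcongr
        exact (norm_pow_le' _ hn).trans (pow_le_one₀ (norm_nonneg _) h)
  by_contra hne
  have hpos : 0 < ‖b‖ := norm_pos_iff.mpr hne
  obtain ⟨n, hn⟩ := exists_nat_gt ((1 + ‖(1 : A)‖) / ‖b‖)
  have := hbound n (by exact_mod_cast (div_pos (by positivity) hpos).trans hn)
  rw [div_lt_iff₀ hpos] at hn
  linarith

theorem IsIdempotentElem.eq_of_mul_eq_right_of_norm_conj_le (s : Aˣ) {p q : A}
    (hp : IsIdempotentElem p) (hq : IsIdempotentElem q) (hpq : p * q = q) (hqp : q * p = p)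
    (hp1 : ‖(s : A) * (1 - 2 * p) * ↑s⁻¹‖ ≤ 1) (hq1 : ‖(s : A) * (1 - 2 * q) * ↑s⁻¹‖ ≤ 1) :
    p = q := by
  have hprod : (1 - 2 * p) * (1 - 2 * q) = 1 + 2 * (q - p) := by
    rw [show (1 - 2 * p) * (1 - 2 * q) = 1 - 2 * p - 2 * q + 4 * (p * q) by noncomm_ring, hpq]
    noncomm_ring
  have hsq : 2 * (q - p) * (2 * (q - p)) = 0 := by
    rw [show 2 * (q - p) * (2 * (q - p)) = 4 * (q * q - q * p - p * q + p * p) by noncomm_ring,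
      hp.eq, hq.eq, hpq, hqp, sub_sub_cancel_left, neg_add_cancel, mul_zero]
  have hconj : (s : A) * (2 * (q - p)) * ↑s⁻¹ = 0 := by
    refine eq_zero_of_mul_self_eq_zero_of_norm_one_add_le
      (by rw [Units.conj_mul, hsq, mul_zero, zero_mul]) ?_
    calc ‖1 + (s : A) * (2 * (q - p)) * ↑s⁻¹‖
        = ‖(s : A) * (1 - 2 * p) * ↑s⁻¹ * ((s : A) * (1 - 2 * q) * ↑s⁻¹)‖ := by
          rw [Units.conj_mul, hprod, mul_add, add_mul, mul_one, Units.mul_inv]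
      _ ≤ 1 := (norm_mul_le _ _).trans (mul_le_one₀ hp1 (norm_nonneg _) hq1)
  have h2 : (2 : ℂ) • (q - p) = 0 := by
    rw [two_smul, ← two_mul]
    simpa using hconj
  rw [smul_eq_zero, sub_eq_zero] at h2
  exact (h2.resolve_left two_ne_zero).symm

theorem IsIdempotentElem.eq_of_mul_eq_left_of_norm_conj_le (s : Aˣ) {p q : A}
    (hp : IsIdempotentElem p) (hq : IsIdempotentElem q) (hpq : p * q = p) (hqp : q * p = q)
    (hp1 : ‖(s : A) * (1 - 2 * p) * ↑s⁻¹‖ ≤ 1) (hq1 : ‖(s : A) * (1 - 2 * q) * ↑s⁻¹‖ ≤ 1) :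
    p = q := by
  have hneg : ∀ r : A, (s : A) * (1 - 2 * (1 - r)) * ↑s⁻¹ = -((s : A) * (1 - 2 * r) * ↑s⁻¹) := by
    intro r
    noncomm_ring
  have h := hp.one_sub.eq_of_mul_eq_right_of_norm_conj_le s hq.one_sub
    (by rw [show (1 - p) * (1 - q) = 1 - q - p + p * q by noncomm_ring, hpq]; abel)
    (by rw [show (1 - q) * (1 - p) = 1 - p - q + q * p by noncomm_ring, hqp]; abel)
    (by rwa [hneg, norm_neg]) (by rwa [hneg, norm_neg])
  exact sub_right_injective h

theorem IsPositiveEl.spectrum_subset_Ioi {s : A} (hs : IsPositiveEl s) (hsu : IsUnit s) :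
    spectrum ℂ s ⊆ Complex.ofReal '' Set.Ioi 0 := by
  intro z hz
  obtain ⟨x, hx, rfl⟩ := hs.2 hz
  refine ⟨x, (lt_of_le_of_ne hx ?_ : 0 < x), rfl⟩
  rintro rfl
  exact spectrum.zero_notMem ℂ hsu (by simpa using hz)

variable [CompleteSpace A]

theorem IsIdempotentElem.exp_smul {p : A} (hp : IsIdempotentElem p) (c : ℂ) :
    NormedSpace.exp (c • p) = (1 - p) + Complex.exp c • p := by
  have hterm : ∀ n : ℕ, ((n.factorial : ℂ)⁻¹) • (c • p) ^ n
      = (if n = 0 then 1 - p else 0) + (c ^ n / n.factorial) • p := by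
    rintro (_ | n)
    · simp
    · rw [smul_pow, hp.pow_succ_eq, smul_smul]; simp [div_eq_inv_mul]
  refine (NormedSpace.exp_series_hasSum_exp' (𝕂 := ℂ) (c • p)).unique ?_
  simp only [hterm]
  exact (hasSum_ite_eq 0 (1 - p)).add
    (by simpa [Complex.exp_eq_exp_ℂ] using (NormedSpace.expSeries_div_hasSum_exp c).smul_const p)

theorem IsIdempotentElem.exp_I_mul_pi_smul {p : A} (hp : IsIdempotentElem p) :
    NormedSpace.exp ((Complex.I * (Real.pi : ℂ)) • p) = 1 - 2 * p := by
  rw [hp.exp_smul, mul_comm, Complex.exp_pi_mul_I]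
  simp only [neg_smul, one_smul]
  noncomm_ring

theorem tendsto_pow_atTop_nhds_zero_of_spectralRadius_lt_one {a : A}
    (h : spectralRadius ℂ a < 1) : Tendsto (a ^ ·) atTop (𝓝 0) := by
  obtain ⟨c, hac, hc1⟩ := ENNReal.lt_iff_exists_nnreal_btwn.1 h
  have hev : ∀ᶠ n : ℕ in atTop, ‖a ^ n‖ ≤ c ^ n := by
    filter_upwards [(spectrum.pow_nnnorm_pow_one_div_tendsto_nhds_spectralRadius a).eventually
      (gt_mem_nhds hac), eventually_gt_atTop 0] with n hn hn0
    rw [one_div, ENNReal.rpow_inv_lt_iff (by positivity), ENNReal.rpow_natCast] at hn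
    exact_mod_cast hn.le
  exact squeeze_zero_norm' hev
    (tendsto_pow_atTop_nhds_zero_of_lt_one c.coe_nonneg (by exact_mod_cast hc1))

theorem spectrum_one_add_smul [Nontrivial A] (a : A) (r : ℂ) :
    spectrum ℂ (1 + r • a) = (fun k => 1 + r * k) '' spectrum ℂ a := by
  have := spectrum.map_polynomial_aeval a (1 + Polynomial.C r * Polynomial.X)
  simp only [map_add, map_one, map_mul, Polynomial.aeval_C, Polynomial.aeval_X,
    Polynomial.eval_add, Polynomial.eval_one, Polynomial.eval_mul, Polynomial.eval_C,
    Polynomial.eval_X] at this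
  rwa [Algebra.smul_def]

theorem spectralRadius_one_sub_smul_lt_one [Nontrivial A] {a : A}
    (ha : spectrum ℂ a ⊆ Complex.ofReal '' Set.Ioi 0) {ε : ℝ} (hε : 0 < ε)
    (hεa : ε * (‖a‖ * ‖(1 : A)‖) < 1) : spectralRadius ℂ (1 - (ε : ℂ) • a) < 1 := by
  refine spectrum.spectralRadius_lt_of_forall_lt (r := 1) _ ?_
  rw [sub_eq_add_neg, ← neg_smul, spectrum_one_add_smul]
  rintro _ ⟨k, hk, rfl⟩
  obtain ⟨x, hx, rfl⟩ := ha hk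
  dsimp only
  have hxa : x ≤ ‖a‖ * ‖(1 : A)‖ := by
    simpa [abs_of_pos (Set.mem_Ioi.mp hx)] using spectrum.norm_le_norm_mul_of_mem hk
  have hεx : 0 < ε * x := mul_pos hε hx
  have hεx1 : ε * x < 1 := (mul_le_mul_of_nonneg_left hxa hε.le).trans_lt hεa
  rw [← NNReal.coe_lt_coe, coe_nnnorm, show (1 : ℂ) + -(ε : ℂ) * x = ((1 - ε * x : ℝ) : ℂ) by
    push_cast; ring, Complex.norm_real, Real.norm_of_nonneg (by linarith)]
  simpa using hεx

theorem isUnit_one_add_smul [Nontrivial A] {b : A}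
    (hb : spectrum ℂ b ⊆ Complex.ofReal '' Set.Ioi 0) {ε : ℝ} (hε : 0 ≤ ε) :
    IsUnit (1 + (ε : ℂ) • b) := by
  rw [← spectrum.zero_notMem_iff ℂ, spectrum_one_add_smul]
  rintro ⟨k, hk, hk0 : 1 + (ε : ℂ) * k = 0⟩
  obtain ⟨x, hx, rfl⟩ := hb hk
  have : 1 + ε * x = 0 := by exact_mod_cast hk0
  nlinarith [mul_nonneg hε (Set.mem_Ioi.mp hx).le]

theorem spectralRadius_inv_one_add_smul_lt_one [Nontrivial A] {b : A}
    (hb : spectrum ℂ b ⊆ Complex.ofReal '' Set.Ioi 0) {ε : ℝ} (hε : 0 < ε) :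
    spectralRadius ℂ (↑(isUnit_one_add_smul hb hε.le).unit⁻¹ : A) < 1 := by
  refine spectrum.spectralRadius_lt_of_forall_lt (r := 1) _ fun z hz => ?_
  rw [← spectrum.inv₀_mem_iff, IsUnit.unit_spec, spectrum_one_add_smul] at hz
  obtain ⟨k, hk, hkz : 1 + (ε : ℂ) * k = z⁻¹⟩ := hz
  obtain ⟨x, hx, rfl⟩ := hb hk
  have hεx : 0 < ε * x := mul_pos hε hx
  rw [← inv_inv z, ← hkz, show (1 : ℂ) + (ε : ℂ) * x = ((1 + ε * x : ℝ) : ℂ) by push_cast; ring,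
    ← NNReal.coe_lt_coe, coe_nnnorm, norm_inv, Complex.norm_real,
    Real.norm_of_nonneg (by linarith)]
  simpa using inv_lt_one_of_one_lt₀ (by linarith)

theorem eq_zero_of_mul_add_mul_eq_zero {a b d : A}
    (ha : spectrum ℂ a ⊆ Complex.ofReal '' Set.Ioi 0)
    (hb : spectrum ℂ b ⊆ Complex.ofReal '' Set.Ioi 0) (h : a * d + d * b = 0) : d = 0 := by
  nontriviality A
  set ε : ℝ := (‖a‖ * ‖(1 : A)‖ + 1)⁻¹
  have hε : 0 < ε := by positivity
  have hεa : ε * (‖a‖ * ‖(1 : A)‖) < 1 := by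
    rw [inv_mul_lt_iff₀ (by positivity)]
    linarith
  set v : A := 1 - (ε : ℂ) • a
  set w : A := ↑(isUnit_one_add_smul hb hε.le).unit⁻¹
  have hstep : v * d * w = d := by
    have hvu : v * d = d * (1 + (ε : ℂ) • b) := by
      simp only [v, sub_mul, mul_add, one_mul, mul_one, smul_mul_assoc, mul_smul_comm,
        eq_neg_of_add_eq_zero_left h]
      module
    rw [hvu, mul_assoc, ← IsUnit.unit_spec (isUnit_one_add_smul hb hε.le), Units.mul_inv, mul_one]
  have hiter : ∀ n : ℕ, d = v ^ n * d * w ^ n := by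
    intro n
    induction n with
    | zero => simp
    | succ n ih =>
      calc d = v ^ n * d * w ^ n := ih
        _ = v ^ n * (v * d * w) * w ^ n := by rw [hstep]
        _ = v ^ (n + 1) * d * w ^ (n + 1) := by rw [pow_succ, pow_succ']; noncomm_ring
  have hlim : Tendsto (fun n : ℕ => v ^ n * d * w ^ n) atTop (𝓝 0) := by
    have := ((tendsto_pow_atTop_nhds_zero_of_spectralRadius_lt_one
      (spectralRadius_one_sub_smul_lt_one ha hε hεa)).mul_const d).mul
      (tendsto_pow_atTop_nhds_zero_of_spectralRadius_lt_one
        (spectralRadius_inv_one_add_smul_lt_one hb hε))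
    rwa [zero_mul, zero_mul] at this
  rw [show (fun n : ℕ => v ^ n * d * w ^ n) = fun _ => d from funext fun n => (hiter n).symm]
    at hlim
  exact tendsto_nhds_unique tendsto_const_nhds hlim

theorem IsPositiveEl.eq_of_sq_eq_sq {s t : A} (hs : IsPositiveEl s) (hsu : IsUnit s)
    (ht : IsPositiveEl t) (htu : IsUnit t) (h : s ^ 2 = t ^ 2) : s = t :=
  sub_eq_zero.1 <| eq_zero_of_mul_add_mul_eq_zero (hs.spectrum_subset_Ioi hsu)
    (ht.spectrum_subset_Ioi htu) (by rw [← sub_eq_zero.2 h]; noncomm_ring)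

theorem IsHermitianWt.exists_norm_conj_eq_one {u p q : A} (hp : IsHermitianWt u p)
    (hq : IsHermitianWt u q) (hpi : IsIdempotentElem p) (hqi : IsIdempotentElem q) :
    ∃ s : Aˣ, ‖(s : A) * (1 - 2 * p) * ↑s⁻¹‖ = 1 ∧ ‖(s : A) * (1 - 2 * q) * ↑s⁻¹‖ = 1 := by
  obtain ⟨s, hs, hsu, hsp⟩ := hp
  obtain ⟨t, ht, htu, htq⟩ := hq
  obtain rfl : s = t := Units.ext (hs.eq_of_sq_eq_sq s.isUnit ht t.isUnit (hsu.trans htu.symm))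
  exact ⟨s, hpi.exp_I_mul_pi_smul ▸ hsp Real.pi, hqi.exp_I_mul_pi_smul ▸ htq Real.pi⟩

theorem IsHermitianWt.eq_of_mul_eq_right {u p q : A} (hp : IsHermitianWt u p)
    (hq : IsHermitianWt u q) (hpi : IsIdempotentElem p) (hqi : IsIdempotentElem q)
    (hpq : p * q = q) (hqp : q * p = p) : p = q := by
  obtain ⟨s, hps, hqs⟩ := hp.exists_norm_conj_eq_one hq hpi hqi
  exact hpi.eq_of_mul_eq_right_of_norm_conj_le s hqi hpq hqp hps.le hqs.le

theorem IsHermitianWt.eq_of_mul_eq_left {u p q : A} (hp : IsHermitianWt u p)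
    (hq : IsHermitianWt u q) (hpi : IsIdempotentElem p) (hqi : IsIdempotentElem q)
    (hpq : p * q = p) (hqp : q * p = q) : p = q := by
  obtain ⟨s, hps, hqs⟩ := hp.exists_norm_conj_eq_one hq hpi hqi
  exact hpi.eq_of_mul_eq_left_of_norm_conj_le s hqi hpq hqp hps.le hqs.le

end BanachAlgebra

section Operators

variable {X Y Z : Type*} [NormedAddCommGroup X] [NormedSpace ℂ X]
  [NormedAddCommGroup Y] [NormedSpace ℂ Y] [NormedAddCommGroup Z] [NormedSpace ℂ Z]

namespace ContinuousLinearMap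

theorem leftInverse_of_comp_comp_eq_of_injective {B : Y →L[ℂ] Z} {S : Z →L[ℂ] Y}
    (h : (B.comp S).comp B = B) (hB : Injective B) : LeftInverse S B :=
  fun y => hB (by simpa using congr($h y))

theorem rightInverse_of_comp_comp_eq_of_surjective {C : X →L[ℂ] Y} {S : Y →L[ℂ] X}
    (h : (C.comp S).comp C = C) (hC : Surjective C) : RightInverse S C := fun y => by
  obtain ⟨x, rfl⟩ := hC y
  simpa using congr($h x)

variable {f : Y →L[ℂ] Z} {g : Z →L[ℂ] Y}

theorem isIdempotentElem_comp_of_leftInverse (h : LeftInverse g f) :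
    IsIdempotentElem (f.comp g) := by
  ext x
  simp [mul_def, h _]

theorem range_comp_of_leftInverse (h : LeftInverse g f) :
    (f.comp g).range = f.range := by
  have : LinearMap.range (g : Z →ₗ[ℂ] Y) = ⊤ := LinearMap.range_eq_top.2 h.surjective
  simpa using LinearMap.range_comp_of_range_eq_top (f : Y →ₗ[ℂ] Z) this

theorem ker_comp_of_leftInverse (h : LeftInverse g f) :
    (f.comp g).ker = g.ker := by
  have : LinearMap.ker (f : Y →ₗ[ℂ] Z) = ⊥ := LinearMap.ker_eq_bot.2 h.injective
  simpa using LinearMap.ker_comp_of_ker_eq_bot (g : Z →ₗ[ℂ] Y) this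

theorem comp_eq_comp_iff_range_eq_and_ker_eq {B : Y →L[ℂ] X} {SB : X →L[ℂ] Y}
    {SC : Z →L[ℂ] X} {C : X →L[ℂ] Z} (hB : LeftInverse SB B) (hC : LeftInverse C SC) :
    B.comp SB = SC.comp C ↔
      Set.range B = Set.range SC ∧
        LinearMap.ker (SB : X →ₗ[ℂ] Y) = LinearMap.ker (C : X →ₗ[ℂ] Z) := by
  rw [IsIdempotentElem.ext_iff (isIdempotentElem_comp_of_leftInverse hB)
    (isIdempotentElem_comp_of_leftInverse hC), range_comp_of_leftInverse hB,
    range_comp_of_leftInverse hC, ker_comp_of_leftInverse hB, ker_comp_of_leftInverse hC]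
  refine Iff.and ?_ Iff.rfl
  rw [← SetLike.coe_set_eq, LinearMap.coe_range, LinearMap.coe_range, ContinuousLinearMap.coe_coe,
    ContinuousLinearMap.coe_coe]

end ContinuousLinearMap

namespace IsWMPIop

variable {E : Z →L[ℂ] Z} {F : Y →L[ℂ] Y} {H : X →L[ℂ] X} {B : Y →L[ℂ] Z} {C : X →L[ℂ] Y}
  {SB : Z →L[ℂ] Y} {SC : Y →L[ℂ] X}

theorem of_factorization (hSB : IsWMPIop E F B SB) (hSC : IsWMPIop F H C SC)
    (hB : Injective B) (hC : Surjective C) : IsWMPIop E H (B.comp C) (SC.comp SB) := by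
  have hl := ContinuousLinearMap.leftInverse_of_comp_comp_eq_of_injective hSB.1 hB
  have hr := ContinuousLinearMap.rightInverse_of_comp_comp_eq_of_surjective hSC.1 hC
  have hQ : (B.comp C).comp (SC.comp SB) = B.comp SB := by ext; simp [hr _]
  have hR : (SC.comp SB).comp (B.comp C) = SC.comp C := by ext; simp [hl _]
  refine ⟨?_, ?_, hQ ▸ hSB.2.2.1, hR ▸ hSC.2.2.2⟩ <;> ext <;> simp [hl _, hr _]

theorem op_comp_eq_of_factorization [CompleteSpace Z] {S : Z →L[ℂ] X}
    (hS : IsWMPIop E H (B.comp C) S) (hSB : IsWMPIop E F B SB)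
    (hB : Injective B) (hC : Surjective C) : (B.comp C).comp S = B.comp SB := by
  have hl := ContinuousLinearMap.leftInverse_of_comp_comp_eq_of_injective hSB.1 hB
  have hSB' : ∀ y, B (C (S (B y))) = B y := fun y => by
    obtain ⟨x, rfl⟩ := hC y
    simpa using congr($(hS.1) x)
  refine hS.2.2.1.eq_of_mul_eq_right hSB.2.2.1 ?_
    (ContinuousLinearMap.isIdempotentElem_comp_of_leftInverse hl) ?_ ?_ <;>
    ext <;> simp [ContinuousLinearMap.mul_def, hSB', hl _]

theorem comp_op_eq_of_factorization [CompleteSpace X] {S : Z →L[ℂ] X}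
    (hS : IsWMPIop E H (B.comp C) S) (hSC : IsWMPIop F H C SC)
    (hB : Injective B) (hC : Surjective C) : S.comp (B.comp C) = SC.comp C := by
  have hr := ContinuousLinearMap.rightInverse_of_comp_comp_eq_of_surjective hSC.1 hC
  have hSC' : ∀ x, C (S (B (C x))) = C x := fun x => hB (by simpa using congr($(hS.1) x))
  refine hS.2.2.2.eq_of_mul_eq_left hSC.2.2.2 ?_
    (ContinuousLinearMap.isIdempotentElem_comp_of_leftInverse hr) ?_ ?_ <;>
    ext <;> simp [ContinuousLinearMap.mul_def, hSC', hr _]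

end IsWMPIop

end Operators

theorem factorization_BC_weighted_EP_iff_range_ker_general
    {X Y : Type*} [NormedAddCommGroup X] [NormedSpace ℂ X] [CompleteSpace X]
    [NormedAddCommGroup Y] [NormedSpace ℂ Y]
    (E H : X →L[ℂ] X) (F : Y →L[ℂ] Y)
    (T : X →L[ℂ] X) (C : X →L[ℂ] Y) (B : Y →L[ℂ] X)
    (hC : Function.Surjective C) (hB : Function.Injective B)
    (hBC : T = B.comp C)
    (SB : X →L[ℂ] Y) (hSB : IsWMPIop E F B SB)
    (SC : Y →L[ℂ] X) (hSC : IsWMPIop F H C SC) :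
    (IsWEPop E H T ↔ B.comp SB = SC.comp C) ∧
    (IsWEPop E H T ↔
      (Set.range ⇑B = Set.range ⇑SC ∧ LinearMap.ker (SB : X →ₗ[ℂ] Y) = LinearMap.ker (C : X →ₗ[ℂ] Y))) := by
  subst hBC
  have hMP := IsWMPIop.of_factorization hSB hSC hB hC
  have hEP : IsWEPop E H (B.comp C) ↔ B.comp SB = SC.comp C := by
    constructor
    · rintro ⟨S, hS, hcomm⟩
      rw [← hS.op_comp_eq_of_factorization hSB hB hC, hcomm,
        hS.comp_op_eq_of_factorization hSC hB hC]
    · intro h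
      refine ⟨SC.comp SB, hMP, ?_⟩
      rw [hMP.op_comp_eq_of_factorization hSB hB hC, h,
        hMP.comp_op_eq_of_factorization hSC hB hC]
  refine ⟨hEP, hEP.trans (ContinuousLinearMap.comp_eq_comp_iff_range_eq_and_ker_eq ?_ ?_)⟩
  · exact ContinuousLinearMap.leftInverse_of_comp_comp_eq_of_injective hSB.1 hB
  · exact ContinuousLinearMap.rightInverse_of_comp_comp_eq_of_surjective hSC.1 hC

/-- For `T = B C` as above, `T` is weighted EP with weights `E` and `H` iff
`B B^†_{E,F} = C^†_{F,H} C`, iff `R(B) = R(C^†_{F,H})` and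
`N(B^†_{E,F}) = N(C)`. -/
theorem factorization_BC_weighted_EP_iff_range_ker
    {X Y : Type*} [NormedAddCommGroup X] [NormedSpace ℂ X] [CompleteSpace X]
    [NormedAddCommGroup Y] [NormedSpace ℂ Y] [CompleteSpace Y]
    (E H : X →L[ℂ] X) (F : Y →L[ℂ] Y)
    (hE : IsPositiveEl E ∧ IsUnit E) (hH : IsPositiveEl H ∧ IsUnit H)
    (hF : IsPositiveEl F ∧ IsUnit F)
    (T : X →L[ℂ] X) (C : X →L[ℂ] Y) (B : Y →L[ℂ] X)
    (hC : Function.Surjective C) (hB : Function.Injective B)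
    (hBC : T = B.comp C)
    (ST : X →L[ℂ] X) (hST : IsWMPIop E H T ST)
    (SB : X →L[ℂ] Y) (hSB : IsWMPIop E F B SB)
    (SC : Y →L[ℂ] X) (hSC : IsWMPIop F H C SC) :
    (IsWEPop E H T ↔ B.comp SB = SC.comp C) ∧
    (IsWEPop E H T ↔
      (Set.range ⇑B = Set.range ⇑SC ∧ LinearMap.ker (SB : X →ₗ[ℂ] Y) = LinearMap.ker (C : X →ₗ[ℂ] Y))) :=
  factorization_BC_weighted_EP_iff_range_ker_general E H F T C B hC hB hBC SB hSB SC hSC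
end
end

section
/- Let A be a complex unital Banach algebra, let e, f, h ∈ A be invertible positive elements, let a ∈ A be such that a^†_{e,h} exists, and suppose a = b c where b x = 0 implies x = 0 and c A = A (so that b^†_{e,f} and c^†_{f,h} exist). Then the following are equivalent: (i) a is weighted EP with weights e and h; (ii) there exists an invertible u ∈ A such that c = u b^†_{e,f} and b = c^†_{f,h} u; (iii) there exist u₁, u₂ ∈ A with u₁ A = A and u₂ x = 0 implying x = 0, such that c = u₂ b^†_{e,f} and b = c^†_{f,h} u₁. -/
/-!
Common definitions: hermitian and positive elements of a complex unital Banach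
algebra, hermitian elements with respect to the equivalent norm induced by an
invertible positive element (weight), and the weighted Moore–Penrose inverse,
both for Banach algebra elements and for bounded linear operators between
Banach spaces.
-/

noncomputable section

/-!
Since `b` is left cancellable and `c` is right surjective, `b^† b = 1 = c c^†`, so `c^† b^†` is a
weighted Moore–Penrose inverse of `a = b c`, with `a c^† b^† = b b^†` and `c^† b^† a = c^† c`.
Weighted Moore–Penrose inverses are unique, because two idempotents that are hermitian in `A^e`
and have the same range (or the same kernel) coincide. Hence `a` is weighted EP iff
`b b^† = c^† c`, and this says exactly that `c b` is invertible with inverse `b^† c^†` and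
`c = (c b) b^†`, `b = c^† (c b)`. In (iii), `u₂ b^† c^† = 1 = b^† c^† u₁` already forces
`u₁ = u₂`.
-/

open NormedSpace

section Ring

variable {R : Type*} [Ring R] {b c y bd cd : R}

theorem mul_eq_one_of_mul_mul_eq_of_injective (hb : ∀ x, b * x = 0 → x = 0)
    (h : b * y * b = b) : y * b = 1 :=
  sub_eq_zero.mp <| hb _ (by rw [mul_sub, ← mul_assoc, h, mul_one, sub_self])

theorem mul_eq_one_of_mul_mul_eq_of_surjective (hc : ∀ z, ∃ x, c * x = z)
    (h : c * y * c = c) : c * y = 1 := by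
  obtain ⟨x, hx⟩ := hc 1
  calc c * y = c * y * (c * x) := by rw [hx, mul_one]
    _ = 1 := by rw [← mul_assoc, h, hx]

variable (hbdb : bd * b = 1) (hccd : c * cd = 1)
include hbdb hccd

theorem mul_eq_mul_iff_exists_unit :
    b * bd = cd * c ↔ ∃ u : Rˣ, c = u * bd ∧ b = cd * u := by
  constructor
  · intro hproj
    have hcb : c * b * bd = c := by rw [mul_assoc, hproj, ← mul_assoc, hccd, one_mul]
    have hbc : cd * (c * b) = b := by rw [← mul_assoc, ← hproj, mul_assoc, hbdb, mul_one]
    refine ⟨⟨c * b, bd * cd, ?_, ?_⟩, hcb.symm, hbc.symm⟩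
    · rw [← mul_assoc, hcb, hccd]
    · rw [mul_assoc, hbc, hbdb]
  · rintro ⟨u, rfl, rfl⟩
    rw [mul_assoc]

theorem exists_unit_iff_exists_surjective_injective :
    (∃ u : Rˣ, c = u * bd ∧ b = cd * u) ↔
      ∃ u₁ u₂ : R, (∀ y, ∃ x, u₁ * x = y) ∧ (∀ x, u₂ * x = 0 → x = 0) ∧
        c = u₂ * bd ∧ b = cd * u₁ := by
  constructor
  · rintro ⟨u, hc, hb⟩
    exact ⟨u, u, fun y => ⟨((u⁻¹ : Rˣ) : R) * y, u.mul_inv_cancel_left y⟩,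
      fun x hx => by simpa using congrArg (((u⁻¹ : Rˣ) : R) * ·) hx, hc, hb⟩
  · rintro ⟨u₁, u₂, -, -, rfl, rfl⟩
    have hright : u₂ * (bd * cd) = 1 := by rw [← mul_assoc, hccd]
    have hleft : bd * cd * u₁ = 1 := by rw [mul_assoc, hbdb]
    obtain rfl := left_inv_eq_right_inv hright hleft
    exact ⟨⟨u₂, bd * cd, hright, hleft⟩, rfl, rfl⟩

end Ring

section CommutingSum

variable {B : Type*} [NormedRing B] [NormedAlgebra ℂ B] [CompleteSpace B]

/-- The double centralizer of `{x, y}` is a closed commutative subalgebra containing the inverses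
of its units, so Gelfand theory in it shows `σ(x + y) ⊆ σ(x) + σ(y)`. -/
theorem isUnit_add_of_commute {x y : B} (hxy : Commute x y)
    (h : ∀ z ∈ spectrum ℂ x, ∀ w ∈ spectrum ℂ y, z + w ≠ 0) : IsUnit (x + y) := by
  set S : Subalgebra ℂ B := Subalgebra.centralizer ℂ (Set.centralizer {x, y})
  have hxS : x ∈ S := Set.subset_centralizer_centralizer (by simp)
  have hyS : y ∈ S := Set.subset_centralizer_centralizer (by simp)
  have hcomm : ∀ u ∈ S, ∀ v ∈ S, u * v = v * u := by
    refine Set.centralizer_centralizer_comm_of_comm ?_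
    simp only [Set.mem_insert_iff, Set.mem_singleton_iff]
    rintro _ (rfl | rfl) _ (rfl | rfl) <;> simp [hxy.eq]
  have : IsClosed (S : Set B) := Set.isClosed_centralizer _
  have : CompleteSpace S := IsClosed.completeSpace_coe
  let _ : NormedCommRing S :=
    { (inferInstance : NormedRing S) with
      mul_comm := fun u v => Subtype.ext (hcomm _ u.2 _ v.2) }
  have hspec : ∀ u : S, spectrum ℂ u ⊆ spectrum ℂ (u : B) := by
    intro u z hz
    contrapose! hz
    obtain ⟨v, hv⟩ := spectrum.notMem_iff.mp hz
    have hvS : ((v⁻¹ : Bˣ) : B) ∈ S := fun g hg =>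
      (Commute.units_inv_right (hv ▸ (S.sub_mem (S.algebraMap_mem z) u.2) g hg :
        Commute g v)).eq
    refine spectrum.notMem_iff.mpr ⟨⟨_, ⟨_, hvS⟩, ?_, ?_⟩, rfl⟩ <;> ext <;> simp [← hv]
  by_contra hxy'
  have hS : ¬IsUnit (⟨x, hxS⟩ + ⟨y, hyS⟩ : S) := fun hu => hxy' (by simpa using hu.map S.val)
  obtain ⟨χ, hχ⟩ := WeakDual.CharacterSpace.exists_apply_eq_zero hS
  rw [map_add] at hχ
  exact h _ (hspec _ (AlgHom.apply_mem_spectrum χ _)) _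
    (hspec _ (AlgHom.apply_mem_spectrum χ _)) hχ

end CommutingSum

section MulLeftRight

variable (𝕜 : Type*) {A : Type*} [NontriviallyNormedField 𝕜] [NormedRing A] [NormedAlgebra 𝕜 A]

theorem spectrum_mul_left_subset (a : A) :
    spectrum 𝕜 (ContinuousLinearMap.mul 𝕜 A a) ⊆ spectrum 𝕜 a := by
  intro z hz
  contrapose! hz
  obtain ⟨v, hv⟩ := spectrum.notMem_iff.mp hz
  have hmul : algebraMap 𝕜 (A →L[𝕜] A) z - ContinuousLinearMap.mul 𝕜 A a =
      ContinuousLinearMap.mul 𝕜 A v := by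
    ext
    simp [hv, Algebra.algebraMap_eq_smul_one]
  refine spectrum.notMem_iff.mpr ⟨⟨_, ContinuousLinearMap.mul 𝕜 A ↑v⁻¹, ?_, ?_⟩, hmul.symm⟩ <;>
    ext <;> simp [← mul_assoc]

theorem spectrum_mul_right_subset (a : A) :
    spectrum 𝕜 ((ContinuousLinearMap.mul 𝕜 A).flip a) ⊆ spectrum 𝕜 a := by
  intro z hz
  contrapose! hz
  obtain ⟨v, hv⟩ := spectrum.notMem_iff.mp hz
  have hmul : algebraMap 𝕜 (A →L[𝕜] A) z - (ContinuousLinearMap.mul 𝕜 A).flip a =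
      (ContinuousLinearMap.mul 𝕜 A).flip v := by
    ext
    simp [hv, Algebra.algebraMap_eq_smul_one]
  refine spectrum.notMem_iff.mpr
    ⟨⟨_, (ContinuousLinearMap.mul 𝕜 A).flip ↑v⁻¹, ?_, ?_⟩, hmul.symm⟩ <;> ext <;> simp [mul_assoc]

end MulLeftRight

section Positive

variable {A : Type*} [NormedRing A] [NormedAlgebra ℂ A]

theorem IsPositiveEl.spectrum_subset_re_pos {s : A} (hs : IsPositiveEl s) (hsu : IsUnit s) :
    spectrum ℂ s ⊆ {z | 0 < z.re} := by
  intro z hz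
  obtain ⟨t, ht, rfl⟩ := hs.2 hz
  refine lt_of_le_of_ne (Set.mem_Ici.mp ht) fun h0 => spectrum.zero_notMem ℂ hsu ?_
  simpa [← h0] using hz

variable [CompleteSpace A]

/-- Rosenblum's argument: `X ↦ s X + X r` is invertible on `A` because its spectrum lies in
`σ(s) + σ(r)`, and it kills `s - r`. -/
theorem IsPositiveEl.eq_of_sq_eq {s r : A} (hs : IsPositiveEl s) (hr : IsPositiveEl r)
    (hsu : IsUnit s) (hru : IsUnit r) (h : s ^ 2 = r ^ 2) : s = r := by
  set L := ContinuousLinearMap.mul ℂ A s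
  set R := (ContinuousLinearMap.mul ℂ A).flip r
  have hLR : Commute L R := by
    ext x
    simp [L, R, mul_assoc]
  have hunit : IsUnit (L + R) := by
    refine isUnit_add_of_commute hLR fun z hz w hw hzw => ?_
    have hz' : 0 < z.re := hs.spectrum_subset_re_pos hsu (spectrum_mul_left_subset ℂ s hz)
    have hw' : 0 < w.re := hr.spectrum_subset_re_pos hru (spectrum_mul_right_subset ℂ r hw)
    linarith [show (z + w).re = 0 by simp [hzw], Complex.add_re z w]
  have hker : (L + R) (s - r) = 0 := by
    simp only [add_apply, L, R, ContinuousLinearMap.mul_apply',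
      ContinuousLinearMap.flip_apply, mul_sub, sub_mul, ← sq, h]
    abel
  exact sub_eq_zero.mp <|
    (ContinuousLinearMap.isUnit_iff_bijective.mp hunit).1 (hker.trans (map_zero _).symm)

theorem IsHermitianWt.norm_conj_exp_eq_one {u a : A} (ha : IsHermitianWt u a) {s : Aˣ}
    (hs : IsPositiveEl (s : A)) (hsu : (s : A) ^ 2 = u) (t : ℝ) :
    ‖(s : A) * exp ((Complex.I * (t : ℂ)) • a) * ((s⁻¹ : Aˣ) : A)‖ = 1 := by
  obtain ⟨r, hr, hru, hr1⟩ := ha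
  obtain rfl : s = r := Units.ext (hs.eq_of_sq_eq hr s.isUnit r.isUnit (hsu.trans hru.symm))
  exact hr1 t

end Positive

theorem eq_zero_of_mul_self_eq_zero_of_norm_one_add_le_s9 {A : Type*} [NormedRing A]
    [NormedSpace ℝ A] {m : A} (hm : m * m = 0) (h : ‖1 + m‖ ≤ 1) : m = 0 := by
  have hpow : ∀ k : ℕ, (1 + m) ^ k = 1 + k • m := by
    intro k
    induction k with
    | zero => simp
    | succ k ih =>
      rw [pow_succ, ih, add_mul, one_mul, mul_add, mul_one, smul_mul_assoc, hm, smul_zero,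
        add_zero, succ_nsmul]
      abel
  have hbound : ∀ k : ℕ, ((k + 1 : ℕ) : ℝ) * ‖m‖ ≤ 1 + ‖(1 : A)‖ := by
    intro k
    calc ((k + 1 : ℕ) : ℝ) * ‖m‖ = ‖(1 + m) ^ (k + 1) - 1‖ := by
          rw [hpow, add_sub_cancel_left, RCLike.norm_nsmul ℝ, nsmul_eq_mul]
      _ ≤ ‖1 + m‖ ^ (k + 1) + ‖(1 : A)‖ :=
          (norm_sub_le _ _).trans (by gcongr; exact norm_pow_le' _ k.succ_pos)
      _ ≤ 1 + ‖(1 : A)‖ := by gcongr; exact pow_le_one₀ (norm_nonneg _) h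
  by_contra hm0
  have hpos : 0 < ‖m‖ := norm_pos_iff.mpr hm0
  obtain ⟨k, hk⟩ := exists_nat_gt ((1 + ‖(1 : A)‖) / ‖m‖)
  have := hbound k
  rw [div_lt_iff₀ hpos] at hk
  push_cast at this
  nlinarith

section Idempotent

variable {A : Type*} [NormedRing A] [NormedAlgebra ℂ A] [CompleteSpace A]

theorem exp_smul_of_isIdempotentElem {p : A} (hp : IsIdempotentElem p) (z : ℂ) :
    exp (z • p) = 1 - p + Complex.exp z • p := by
  have hterm : ∀ n : ℕ, (n.factorial⁻¹ : ℂ) • (z • p) ^ n =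
      (if n = 0 then 1 - p else 0) + ((n.factorial⁻¹ : ℂ) • z ^ n) • p := by
    rintro (_ | n)
    · simp
    · simp [smul_pow, hp.pow_succ_eq, smul_smul]
  have hsum := (hasSum_ite_eq 0 (1 - p)).add
    ((NormedSpace.exp_series_hasSum_exp' (𝕂 := ℂ) z).smul_const p)
  rw [← Complex.exp_eq_exp_ℂ] at hsum
  exact (NormedSpace.exp_series_hasSum_exp' (𝕂 := ℂ) (z • p)).unique (by simpa only [hterm])

theorem exp_I_pi_smul_of_isIdempotentElem {p : A} (hp : IsIdempotentElem p) :
    exp ((Complex.I * (Real.pi : ℂ)) • p) = 1 - (2 : ℂ) • p := by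
  rw [exp_smul_of_isIdempotentElem hp, mul_comm, Complex.exp_pi_mul_I]
  module

end Idempotent

section HermitianIdempotent

variable {A : Type*} [NormedRing A] [NormedAlgebra ℂ A] [CompleteSpace A] {e p q : A}

/-- For a hermitian idempotent `p`, `exp(iπp) = 1 - 2p` is an isometry of `A^e`; a product of two
such reflections is a contraction, which rules out a nonzero square-zero perturbation of `1`. -/
theorem IsHermitianWt.eq_zero_of_reflection_mul_reflection {n : A}
    (hhp : IsHermitianWt e p) (hhq : IsHermitianWt e q)
    (hp : IsIdempotentElem p) (hq : IsIdempotentElem q) (hn : n * n = 0)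
    (hpq : (1 - (2 : ℂ) • p) * (1 - (2 : ℂ) • q) = 1 - (2 : ℂ) • n) : n = 0 := by
  obtain ⟨s, hs, hse, hsp⟩ := hhp
  have h1 := hsp Real.pi
  have h2 := hhq.norm_conj_exp_eq_one hs hse Real.pi
  rw [exp_I_pi_smul_of_isIdempotentElem hp] at h1
  rw [exp_I_pi_smul_of_isIdempotentElem hq] at h2
  set c := ConjAct.toConjAct s
  replace h1 : ‖c • (1 - (2 : ℂ) • p)‖ = 1 := h1
  replace h2 : ‖c • (1 - (2 : ℂ) • q)‖ = 1 := h2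
  have hm : (c • ((-2 : ℂ) • n)) * (c • ((-2 : ℂ) • n)) = 0 := by
    rw [← smul_mul', smul_mul_smul_comm, hn, smul_zero, smul_zero]
  have hconj : 1 + c • ((-2 : ℂ) • n) = c • (1 - (2 : ℂ) • p) * c • (1 - (2 : ℂ) • q) := by
    rw [← smul_mul', hpq, ← smul_one c, ← smul_add, smul_one, neg_smul, sub_eq_add_neg]
  have hm0 := eq_zero_of_mul_self_eq_zero_of_norm_one_add_le_s9 hm <| by
    rw [hconj]
    exact (norm_mul_le _ _).trans (by rw [h1, h2, one_mul])
  simpa [smul_eq_zero_iff_eq] using hm0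

theorem IsHermitianWt.eq_of_same_range (hhp : IsHermitianWt e p) (hhq : IsHermitianWt e q)
    (hp : IsIdempotentElem p) (hq : IsIdempotentElem q) (hpq : p * q = q) (hqp : q * p = p) :
    p = q := by
  refine sub_eq_zero.mp (hhp.eq_zero_of_reflection_mul_reflection hhq hp hq ?_ ?_)
  · simp only [sub_mul, mul_sub, hp.eq, hq.eq, hpq, hqp]
    abel
  · simp only [sub_mul, mul_sub, one_mul, mul_one, smul_mul_smul_comm, hpq, smul_sub]
    module

theorem IsHermitianWt.eq_of_same_kernel (hhp : IsHermitianWt e p) (hhq : IsHermitianWt e q)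
    (hp : IsIdempotentElem p) (hq : IsIdempotentElem q) (hpq : p * q = p) (hqp : q * p = q) :
    p = q := by
  refine (sub_eq_zero.mp (hhp.eq_zero_of_reflection_mul_reflection hhq hp hq ?_ ?_)).symm
  · simp only [sub_mul, mul_sub, hp.eq, hq.eq, hpq, hqp]
    abel
  · simp only [sub_mul, mul_sub, one_mul, mul_one, smul_mul_smul_comm, hpq, smul_sub]
    module

end HermitianIdempotent

namespace IsWMPI

variable {A : Type*} [NormedRing A] [NormedAlgebra ℂ A] {e f h a b b' c bd cd : A}

theorem mul_of_mul_eq_one (hbd : IsWMPI e f b bd) (hcd : IsWMPI f h c cd) (hbdb : bd * b = 1)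
    (hccd : c * cd = 1) : IsWMPI e h (b * c) (cd * bd) := by
  have hleft : b * c * (cd * bd) = b * bd := by
    rw [mul_assoc, ← mul_assoc c, hccd, one_mul]
  have hright : cd * bd * (b * c) = cd * c := by
    rw [mul_assoc, ← mul_assoc bd, hbdb, one_mul]
  refine ⟨?_, ?_, hleft ▸ hbd.2.2.1, hright ▸ hcd.2.2.2⟩
  · rw [hleft, mul_assoc, ← mul_assoc bd, hbdb, one_mul]
  · rw [hright, mul_assoc, ← mul_assoc c, hccd, one_mul]

variable [CompleteSpace A]

theorem unique (hb : IsWMPI e f a b) (hb' : IsWMPI e f a b') : b = b' := by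
  obtain ⟨hab, hbab, hhab, hhba⟩ := hb
  obtain ⟨hab', hbab', hhab', hhba'⟩ := hb'
  have hrange : a * b = a * b' :=
    hhab.eq_of_same_range hhab' (by simp [IsIdempotentElem, ← mul_assoc, hab])
      (by simp [IsIdempotentElem, ← mul_assoc, hab']) (by rw [← mul_assoc, hab])
      (by rw [← mul_assoc, hab'])
  have hkernel : b * a = b' * a :=
    hhba.eq_of_same_kernel hhba' (by simp [IsIdempotentElem, ← mul_assoc, hbab])
      (by simp [IsIdempotentElem, ← mul_assoc, hbab']) (by rw [mul_assoc, ← mul_assoc a, hab'])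
      (by rw [mul_assoc, ← mul_assoc a, hab])
  calc b = b * (a * b) := by rw [← mul_assoc, hbab]
    _ = b' * a * b' := by rw [hrange, ← mul_assoc, hkernel]
    _ = b' := hbab'

theorem isWEP_iff_commute (hb : IsWMPI e f a b) : IsWEP e f a ↔ a * b = b * a :=
  ⟨fun ⟨_, hb', hcomm⟩ => hb.unique hb' ▸ hcomm, fun hcomm => ⟨b, hb, hcomm⟩⟩

end IsWMPI

theorem factorization_bc_weighted_EP_iff_invertible_factor_general
    {A : Type*} [NormedRing A] [NormedAlgebra ℂ A] [CompleteSpace A]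
    (e f h a b c : A)
    (habc : a = b * c)
    (hb : ∀ x : A, b * x = 0 → x = 0) (hc : ∀ y : A, ∃ x : A, c * x = y)
    (bd : A) (hbd : IsWMPI e f b bd) (cd : A) (hcd : IsWMPI f h c cd) :
    (IsWEP e h a ↔ ∃ u : Aˣ, c = (u : A) * bd ∧ b = cd * (u : A)) ∧
    (IsWEP e h a ↔
      ∃ u₁ u₂ : A, (∀ y : A, ∃ x : A, u₁ * x = y) ∧ (∀ x : A, u₂ * x = 0 → x = 0) ∧
        c = u₂ * bd ∧ b = cd * u₁) := by
  have hbdb : bd * b = 1 := mul_eq_one_of_mul_mul_eq_of_injective hb hbd.1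
  have hccd : c * cd = 1 := mul_eq_one_of_mul_mul_eq_of_surjective hc hcd.1
  have hwep : IsWEP e h a ↔ b * bd = cd * c := by
    rw [habc, (hbd.mul_of_mul_eq_one hcd hbdb hccd).isWEP_iff_commute, mul_assoc,
      ← mul_assoc c, hccd, one_mul, mul_assoc cd, ← mul_assoc bd, hbdb, one_mul]
  rw [hwep, mul_eq_mul_iff_exists_unit hbdb hccd]
  exact ⟨Iff.rfl, exists_unit_iff_exists_surjective_injective hbdb hccd⟩

/-- For `a = b c` as above, `a` is weighted EP with weights `e` and `h` iff
there is an invertible `u` with `c = u b^†_{e,f}` and `b = c^†_{f,h} u`, iff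
there are `u₁` left-surjective and `u₂` left-injective with `c = u₂ b^†_{e,f}`
and `b = c^†_{f,h} u₁`. -/
theorem factorization_bc_weighted_EP_iff_invertible_factor
    {A : Type*} [NormedRing A] [NormedAlgebra ℂ A] [CompleteSpace A]
    (e f h a b c : A)
    (he : IsPositiveEl e ∧ IsUnit e) (hf : IsPositiveEl f ∧ IsUnit f)
    (hh : IsPositiveEl h ∧ IsUnit h)
    (ad : A) (had : IsWMPI e h a ad)
    (habc : a = b * c)
    (hb : ∀ x : A, b * x = 0 → x = 0) (hc : ∀ y : A, ∃ x : A, c * x = y)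
    (bd : A) (hbd : IsWMPI e f b bd) (cd : A) (hcd : IsWMPI f h c cd) :
    (IsWEP e h a ↔ ∃ u : Aˣ, c = (u : A) * bd ∧ b = cd * (u : A)) ∧
    (IsWEP e h a ↔
      ∃ u₁ u₂ : A, (∀ y : A, ∃ x : A, u₁ * x = y) ∧ (∀ x : A, u₂ * x = 0 → x = 0) ∧
        c = u₂ * bd ∧ b = cd * u₁) :=
  factorization_bc_weighted_EP_iff_invertible_factor_general e f h a b c habc hb hc bd hbd cd hcd
end
end
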